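/- For a proper k-ideal I of a commutative semiring R, the following are equivalent: (1) I is k-semiprime; (2) I is the intersection of some nonempty family of k-prime ideals of R; (3) I is k-radical, i.e., R_k(I) = I. -/

import Mathlib

variable {R : Type*} [CommSemiring R]

/-- An ideal `I` of a commutative semiring is a *k-ideal* (subtractive ideal) if
`a ∈ I` and `a + b ∈ I` imply `b ∈ I`. -/
def IsKIdeal (I : Ideal R) : Prop :=
  ∀ a b : R, a ∈ I → a + b ∈ I → b ∈ I

/-- A *k-prime* ideal: a proper k-ideal `P` such that for all k-ideals `I`, `J`,
`I * J ≤ P` implies `I ≤ P` or `J ≤ P`. -/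
def IsKPrime (P : Ideal R) : Prop :=
  IsKIdeal P ∧ P ≠ ⊤ ∧
    ∀ I J : Ideal R, IsKIdeal I → IsKIdeal J → I * J ≤ P → I ≤ P ∨ J ≤ P

/-- A *k-semiprime* ideal: a proper k-ideal `Q` such that for every k-ideal `I`,
`I * I ≤ Q` implies `I ≤ Q`. -/
def IsKSemiprime (Q : Ideal R) : Prop :=
  IsKIdeal Q ∧ Q ≠ ⊤ ∧ ∀ I : Ideal R, IsKIdeal I → I * I ≤ Q → I ≤ Q

/-- The *k-radical* of an ideal: the intersection of all k-prime ideals containing it. -/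
def kRadical (I : Ideal R) : Ideal R :=
  sInf {P : Ideal R | IsKPrime P ∧ I ≤ P}

/-!
The k-ideals behave like the ideals of a ring once every ideal is replaced by its k-closure, the
smallest k-ideal containing it; the k-closure of a product is controlled by the colon ideal, which
is a k-ideal whenever its numerator is. The substantial implication is that a k-semiprime ideal
`I` is k-radical. Given `a ∉ I`, semiprimeness produces `a = a₀, a₁, …` outside `I` with
`aₙ₊₁ ∈ ⟨aₙ⟩ₖ²`, where `⟨x⟩ₖ` is the k-closure of `(x)`. These elements form a k-m-system, and a
k-ideal containing `I` that is maximal (by Zorn) among those missing the system is k-prime.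
-/

def kClosure (J : Ideal R) : Ideal R :=
  sInf {P : Ideal R | IsKIdeal P ∧ J ≤ P}

def kSpan (x : R) : Ideal R :=
  kClosure (Ideal.span {x})

/-- The analogue, for k-ideals, of an m-system: the complement of a k-prime ideal is one. -/
def IsKMSystem (S : Set R) : Prop :=
  ∀ x ∈ S, ∀ y ∈ S, ∃ z ∈ S, z ∈ kSpan x * kSpan y

theorem isKIdeal_sInf {F : Set (Ideal R)} (hF : ∀ P ∈ F, IsKIdeal P) : IsKIdeal (sInf F) := by
  intro a b ha hab
  rw [Submodule.mem_sInf] at *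
  exact fun P hP => hF P hP a b (ha P hP) (hab P hP)

theorem isKIdeal_sSup_of_directedOn {F : Set (Ideal R)} (hne : F.Nonempty)
    (hdir : DirectedOn (· ≤ ·) F) (hF : ∀ P ∈ F, IsKIdeal P) : IsKIdeal (sSup F) := by
  intro a b ha hab
  simp only [Submodule.mem_sSup_of_directed hne hdir] at *
  obtain ⟨A, hA, haA⟩ := ha
  obtain ⟨B, hB, habB⟩ := hab
  obtain ⟨C, hC, hAC, hBC⟩ := hdir A hA B hB
  exact ⟨C, hC, hF C hC a b (hAC haA) (hBC habB)⟩

theorem IsKIdeal.colon {P : Ideal R} (hP : IsKIdeal P) (S : Set R) : IsKIdeal (P.colon S) := by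
  intro a b ha hab
  rw [Submodule.mem_colon] at *
  intro s hs
  exact hP _ _ (ha s hs) (by simpa only [add_smul] using hab s hs)

theorem isKIdeal_kClosure (J : Ideal R) : IsKIdeal (kClosure J) :=
  isKIdeal_sInf fun _ hP => hP.1

theorem le_kClosure (J : Ideal R) : J ≤ kClosure J :=
  le_sInf fun _ hP => hP.2

theorem kClosure_le {J P : Ideal R} (hP : IsKIdeal P) (h : J ≤ P) : kClosure J ≤ P :=
  sInf_le ⟨hP, h⟩

theorem kClosure_le_iff {J P : Ideal R} (hP : IsKIdeal P) : kClosure J ≤ P ↔ J ≤ P :=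
  ⟨(le_kClosure J).trans, kClosure_le hP⟩

theorem IsKIdeal.kClosure_eq {P : Ideal R} (hP : IsKIdeal P) : kClosure P = P :=
  le_antisymm (kClosure_le hP le_rfl) (le_kClosure P)

theorem kClosure_mono : Monotone (kClosure : Ideal R → Ideal R) := fun _ K h =>
  kClosure_le (isKIdeal_kClosure K) (h.trans (le_kClosure K))

theorem kClosure_mul_le (A B : Ideal R) : kClosure A * B ≤ kClosure (A * B) := by
  have hA : kClosure A ≤ (kClosure (A * B)).colon B :=
    kClosure_le ((isKIdeal_kClosure _).colon _) fun a ha =>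
      Submodule.mem_colon.2 fun b hb => le_kClosure _ (Ideal.mul_mem_mul ha hb)
  exact Ideal.mul_le.2 fun a ha b hb => Submodule.mem_colon.1 (hA ha) b hb

theorem kClosure_mul_kClosure_le (A B : Ideal R) :
    kClosure A * kClosure B ≤ kClosure (A * B) :=
  calc kClosure A * kClosure B ≤ kClosure (A * kClosure B) := kClosure_mul_le A _
    _ = kClosure (kClosure B * A) := by rw [mul_comm]
    _ ≤ kClosure (kClosure (B * A)) := kClosure_mono (kClosure_mul_le B A)
    _ = kClosure (A * B) := by rw [(isKIdeal_kClosure _).kClosure_eq, mul_comm]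

theorem isKIdeal_kSpan (x : R) : IsKIdeal (kSpan x) :=
  isKIdeal_kClosure _

theorem kSpan_le_iff {x : R} {P : Ideal R} (hP : IsKIdeal P) : kSpan x ≤ P ↔ x ∈ P := by
  rw [kSpan, kClosure_le_iff hP, Ideal.span_singleton_le_iff_mem]

theorem sup_mul_sup_le {P J K : Ideal R} (h : J * K ≤ P) : (P ⊔ J) * (P ⊔ K) ≤ P := by
  rw [Ideal.sup_mul, Ideal.mul_sup, Ideal.mul_sup]
  exact sup_le (sup_le Ideal.mul_le_left Ideal.mul_le_left) (sup_le Ideal.mul_le_right h)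

theorem isKPrime_of_maximal {S : Set R} (hS : IsKMSystem S) (hne : S.Nonempty) {P : Ideal R}
    (hP : Maximal (fun Q : Ideal R => IsKIdeal Q ∧ Disjoint (Q : Set R) S) P) : IsKPrime P := by
  obtain ⟨⟨hkP, hPS⟩, hmax⟩ := hP
  have meets : ∀ J : Ideal R, ¬J ≤ P → ∃ x ∈ S, x ∈ kClosure (P ⊔ J) := by
    intro J hJ
    by_contra! h
    have hle := hmax ⟨isKIdeal_kClosure _, Set.disjoint_right.2 h⟩
      (le_sup_left.trans (le_kClosure _))
    exact hJ (le_sup_right.trans ((le_kClosure _).trans hle))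
  refine ⟨hkP, ?_, fun J K _ _ hJK => ?_⟩
  · rintro rfl
    obtain ⟨x, hx⟩ := hne
    exact Set.disjoint_left.1 hPS Submodule.mem_top hx
  · by_contra! hJK'
    obtain ⟨x, hxS, hx⟩ := meets J hJK'.1
    obtain ⟨y, hyS, hy⟩ := meets K hJK'.2
    obtain ⟨z, hzS, hz⟩ := hS x hxS y hyS
    have hxy : kSpan x * kSpan y ≤ P :=
      calc kSpan x * kSpan y ≤ kClosure (P ⊔ J) * kClosure (P ⊔ K) :=
            Ideal.mul_mono ((kSpan_le_iff (isKIdeal_kClosure _)).2 hx)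
              ((kSpan_le_iff (isKIdeal_kClosure _)).2 hy)
        _ ≤ kClosure ((P ⊔ J) * (P ⊔ K)) := kClosure_mul_kClosure_le _ _
        _ ≤ P := kClosure_le hkP (sup_mul_sup_le hJK)
    exact Set.disjoint_left.1 hPS (hxy hz) hzS

theorem exists_kPrime_le_disjoint {I : Ideal R} (hI : IsKIdeal I) {S : Set R}
    (hS : IsKMSystem S) (hne : S.Nonempty) (hIS : Disjoint (I : Set R) S) :
    ∃ P : Ideal R, IsKPrime P ∧ I ≤ P ∧ Disjoint (P : Set R) S := by
  set T := {Q : Ideal R | IsKIdeal Q ∧ Disjoint (Q : Set R) S}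
  have hchains : ∀ c ⊆ T, IsChain (· ≤ ·) c → ∀ Q ∈ c, ∃ ub ∈ T, ∀ P ∈ c, P ≤ ub := by
    intro c hc hchain Q hQ
    have hdir := hchain.directedOn
    refine ⟨sSup c, ⟨isKIdeal_sSup_of_directedOn ⟨Q, hQ⟩ hdir fun P hP => (hc hP).1, ?_⟩,
      fun _ => le_sSup⟩
    refine Set.disjoint_left.2 fun x hx => ?_
    obtain ⟨A, hA, hxA⟩ := (Submodule.mem_sSup_of_directed ⟨Q, hQ⟩ hdir).1 hx
    exact Set.disjoint_left.1 (hc hA).2 hxA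
  obtain ⟨P, hIP, hmax⟩ := zorn_le_nonempty₀ T hchains I ⟨hI, hIS⟩
  exact ⟨P, isKPrime_of_maximal hS hne hmax, hIP, hmax.1.2⟩

theorem exists_kMSystem_of_isKSemiprime {I : Ideal R} (hI : IsKSemiprime I) {a : R}
    (ha : a ∉ I) : ∃ S : Set R, IsKMSystem S ∧ a ∈ S ∧ Disjoint (I : Set R) S := by
  have step : ∀ x : {x // x ∉ I}, ∃ y : {y // y ∉ I}, y.1 ∈ kSpan x.1 * kSpan x.1 := by
    rintro ⟨x, hx⟩
    by_contra! h
    have hsq : kSpan x * kSpan x ≤ I := fun y hy => by_contra fun hyI => h ⟨y, hyI⟩ hy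
    exact hx ((kSpan_le_iff hI.1).1 (hI.2.2 _ (isKIdeal_kSpan x) hsq))
  choose f hf using step
  let s : ℕ → {x // x ∉ I} := fun n => f^[n] ⟨a, ha⟩
  have hs : ∀ n, (s (n + 1)).1 ∈ kSpan (s n).1 * kSpan (s n).1 := fun n => by
    simpa only [s, Function.iterate_succ_apply'] using hf (s n)
  have hanti : Antitone fun n => kSpan (s n).1 := antitone_nat_of_succ_le fun n =>
    (kSpan_le_iff (isKIdeal_kSpan _)).2 (Ideal.mul_le_left (hs n))
  refine ⟨Set.range fun n => (s n).1, ?_, ⟨0, rfl⟩, ?_⟩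
  · rintro _ ⟨m, rfl⟩ _ ⟨n, rfl⟩
    exact ⟨_, ⟨max m n + 1, rfl⟩,
      Ideal.mul_mono (hanti (le_max_left m n)) (hanti (le_max_right m n)) (hs _)⟩
  · exact Set.disjoint_right.2 fun _ ⟨n, hn⟩ => hn ▸ (s n).2

theorem le_kRadical (I : Ideal R) : I ≤ kRadical I :=
  le_sInf fun _ hP => hP.2

theorem kRadical_le {I P : Ideal R} (hP : IsKPrime P) (hIP : I ≤ P) : kRadical I ≤ P :=
  sInf_le ⟨hP, hIP⟩

theorem exists_kPrime_le_of_kRadical_ne_top {I : Ideal R} (h : kRadical I ≠ ⊤) :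
    ∃ P : Ideal R, IsKPrime P ∧ I ≤ P := by
  by_contra! hnone
  exact h (sInf_eq_top.2 fun P hP => (hnone P hP.1 hP.2).elim)

theorem kRadical_sInf_eq {F : Set (Ideal R)} (hF : ∀ P ∈ F, IsKPrime P) :
    kRadical (sInf F) = sInf F :=
  le_antisymm (le_sInf fun P hP => kRadical_le (hF P hP) (sInf_le hP)) (le_kRadical _)

theorem IsKSemiprime.kRadical_eq {I : Ideal R} (hI : IsKSemiprime I) : kRadical I = I := by
  refine le_antisymm (fun x hx => ?_) (le_kRadical I)
  by_contra hxI
  obtain ⟨S, hS, hxS, hIS⟩ := exists_kMSystem_of_isKSemiprime hI hxI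
  obtain ⟨P, hP, hIP, hPS⟩ := exists_kPrime_le_disjoint hI.1 hS ⟨x, hxS⟩ hIS
  exact Set.disjoint_left.1 hPS (kRadical_le hP hIP hx) hxS

theorem isKSemiprime_sInf {F : Set (Ideal R)} (hne : F.Nonempty) (hF : ∀ P ∈ F, IsKPrime P) :
    IsKSemiprime (sInf F) := by
  obtain ⟨P, hP⟩ := hne
  refine ⟨isKIdeal_sInf fun Q hQ => (hF Q hQ).1, ne_top_of_le_ne_top (hF P hP).2.1 (sInf_le hP),
    fun J hJ hJJ => le_sInf fun Q hQ => ?_⟩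
  exact ((hF Q hQ).2.2 J J hJ hJ (hJJ.trans (sInf_le hQ))).elim id id

theorem kSemiprime_tfae_general (I : Ideal R) (hproper : I ≠ ⊤) :
    (IsKSemiprime I ↔
        ∃ F : Set (Ideal R), F.Nonempty ∧ (∀ P ∈ F, IsKPrime P) ∧ I = sInf F) ∧
      ((∃ F : Set (Ideal R), F.Nonempty ∧ (∀ P ∈ F, IsKPrime P) ∧ I = sInf F) ↔
        kRadical I = I) := by
  have radical_imp_family : kRadical I = I →
      ∃ F : Set (Ideal R), F.Nonempty ∧ (∀ P ∈ F, IsKPrime P) ∧ I = sInf F := fun h =>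
    ⟨{P | IsKPrime P ∧ I ≤ P}, exists_kPrime_le_of_kRadical_ne_top (by rwa [h]),
      fun _ hP => hP.1, h.symm⟩
  refine ⟨⟨fun h => radical_imp_family h.kRadical_eq, ?_⟩, ⟨?_, radical_imp_family⟩⟩
  · rintro ⟨F, hne, hF, rfl⟩
    exact isKSemiprime_sInf hne hF
  · rintro ⟨F, -, hF, rfl⟩
    exact kRadical_sInf_eq hF

/-- For a proper k-ideal `I`, the following are equivalent: `I` is k-semiprime;
`I` is an intersection of a nonempty family of k-prime ideals; `I` is k-radical. -/
theorem kSemiprime_tfae (I : Ideal R) (hI : IsKIdeal I) (hproper : I ≠ ⊤) :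
    (IsKSemiprime I ↔
        ∃ F : Set (Ideal R), F.Nonempty ∧ (∀ P ∈ F, IsKPrime P) ∧ I = sInf F) ∧
      ((∃ F : Set (Ideal R), F.Nonempty ∧ (∀ P ∈ F, IsKPrime P) ∧ I = sInf F) ↔
        kRadical I = I) :=
  kSemiprime_tfae_general I hproper
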